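/- There exists N₀ ∈ ℕ, depending only on Q, α and θ, such that for every N ≥ N₀ the following are equivalent for every pair (M,B) consisting of a representation M of Q on (V_i) and a family B = (B_i : V_i → E_i)_{i∈Q0⁻}: (i) every one-framed subrepresentation of (M,B) has η⁻-value ≤ 0 ((M,B) is η⁻-semi-stable); (ii) every one-framed subrepresentation of (M,B) other than ((0)_i,0) and ((V_i)_i,k) has η⁻-value < 0 ((M,B) is η⁻-stable); (iii) no nonzero subrepresentation U of M satisfies U_i ⊆ ker B_i for all i ∈ Q0⁻ (equivalently, for every j ∈ Q0 the map V_j → ⊕_q E_{t(q)}, v ↦ (B_{t(q)}(M_q(v)))_q, over all paths q with source j and target in Q0⁻, is injective). -/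
import Mathlib


open Module

section

variable {k Q0 Q1 : Type} [Field k] (src tgt : Q1 → Q0)
  (V : Q0 → Type) [∀ i, AddCommGroup (V i)] [∀ i, Module k (V i)]

/-- `U` is a subrepresentation of the representation `M`. -/
def IsSubrep (M : ∀ a : Q1, V (src a) →ₗ[k] V (tgt a))
    (U : ∀ i : Q0, Submodule k (V i)) : Prop :=
  ∀ a : Q1, ∀ x ∈ U (src a), M a x ∈ U (tgt a)

variable [Fintype Q0] (θ : Q0 → ℤ)

/-- The η⁻-value of a one-framed subrepresentation `(U,L)` for the framing parameter `N`:
`Σ_{i∈Q0⁻} (θ_i + N)·dim U_i + Σ_{i∉Q0⁻} θ_i·dim U_i − N·|α⁻|·dim L`. -/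
noncomputable def EtaMinusVal (N : ℕ) (U : ∀ i : Q0, Submodule k (V i))
    (L : Submodule k k) : ℤ :=
  (∑ i : {i : Q0 // θ i ≤ 0}, (θ i.1 + (N : ℤ)) * (finrank k (U i.1) : ℤ))
    + (∑ i : {i : Q0 // ¬ θ i ≤ 0}, θ i.1 * (finrank k (U i.1) : ℤ))
    - (N : ℤ) * (∑ i : {i : Q0 // θ i ≤ 0}, (finrank k (V i.1) : ℤ)) * (finrank k L : ℤ)

end

/-- For `N ≫ 0` the following are equivalent: (i) `(M,B)` is η⁻-semi-stable, (ii) `(M,B)`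
is η⁻-stable, (iii) no nonzero subrepresentation `U` of `M` is contained in the kernels of
the maps `B_i`, `i ∈ Q0⁻`. -/
theorem statement11 {k Q0 Q1 : Type} [Field k] [Fintype Q0] [Fintype Q1]
    (src tgt : Q1 → Q0)
    (V : Q0 → Type) [∀ i, AddCommGroup (V i)] [∀ i, Module k (V i)]
    [∀ i, FiniteDimensional k (V i)]
    (θ : Q0 → ℤ)
    (hθ : ∑ i : Q0, θ i * (finrank k (V i) : ℤ) = 0)
    (E : {i : Q0 // θ i ≤ 0} → Type) [∀ i, AddCommGroup (E i)] [∀ i, Module k (E i)]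
    [∀ i, FiniteDimensional k (E i)]
    (hE : ∀ i : {i : Q0 // θ i ≤ 0}, finrank k (E i) = finrank k (V i.1)) :
    ∃ N₀ : ℕ, ∀ N : ℕ, N₀ ≤ N →
      ∀ (M : ∀ a : Q1, V (src a) →ₗ[k] V (tgt a))
        (B : ∀ i : {i : Q0 // θ i ≤ 0}, V i.1 →ₗ[k] E i),
        ((∀ (U : ∀ i : Q0, Submodule k (V i)) (L : Submodule k k),
            IsSubrep src tgt V M U →
            (L = ⊥ → ∀ i : {i : Q0 // θ i ≤ 0}, U i.1 ≤ LinearMap.ker (B i)) →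
            EtaMinusVal V θ N U L ≤ 0)
          ↔
          (∀ (U : ∀ i : Q0, Submodule k (V i)) (L : Submodule k k),
            IsSubrep src tgt V M U →
            (L = ⊥ → ∀ i : {i : Q0 // θ i ≤ 0}, U i.1 ≤ LinearMap.ker (B i)) →
            ¬((∀ i, U i = ⊥) ∧ L = ⊥) → ¬((∀ i, U i = ⊤) ∧ L = ⊤) →
            EtaMinusVal V θ N U L < 0))
        ∧
        ((∀ (U : ∀ i : Q0, Submodule k (V i)) (L : Submodule k k),
            IsSubrep src tgt V M U →
            (L = ⊥ → ∀ i : {i : Q0 // θ i ≤ 0}, U i.1 ≤ LinearMap.ker (B i)) →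
            ¬((∀ i, U i = ⊥) ∧ L = ⊥) → ¬((∀ i, U i = ⊤) ∧ L = ⊤) →
            EtaMinusVal V θ N U L < 0)
          ↔
          (¬ ∃ U : ∀ i : Q0, Submodule k (V i),
            IsSubrep src tgt V M U ∧ (¬ ∀ i, U i = ⊥) ∧
            (∀ i : {i : Q0 // θ i ≤ 0}, U i.1 ≤ LinearMap.ker (B i)))) := by
  classical
  refine ⟨(∑ i : Q0, (θ i).natAbs * finrank k (V i)) + 1, ?_⟩
  intro N hN M B
  set C : ℤ := ∑ i : Q0, |θ i| * (finrank k (V i) : ℤ) with hC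
  have hNC : C + 1 ≤ (N : ℤ) := by
    have h1 : ((∑ i : Q0, (θ i).natAbs * finrank k (V i) : ℕ) : ℤ) = C := by
      rw [hC]; push_cast [Int.natCast_natAbs]; rfl
    calc C + 1 = (((∑ i : Q0, (θ i).natAbs * finrank k (V i)) + 1 : ℕ) : ℤ) := by
          push_cast [h1]; ring
      _ ≤ (N : ℤ) := by exact_mod_cast hN
  -- rewrite of the eta value
  have eta_eq : ∀ (U : ∀ i, Submodule k (V i)) (L : Submodule k k),
      EtaMinusVal V θ N U L =
        (∑ i : Q0, θ i * (finrank k (U i) : ℤ))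
        + (N : ℤ) * (∑ i : {i : Q0 // θ i ≤ 0}, (finrank k (U i.1) : ℤ))
        - (N : ℤ) * (∑ i : {i : Q0 // θ i ≤ 0}, (finrank k (V i.1) : ℤ))
            * (finrank k L : ℤ) := by
    intro U L
    unfold EtaMinusVal
    rw [← Fintype.sum_subtype_add_sum_subtype (fun i => θ i ≤ 0)
      (fun i => θ i * (finrank k (U i) : ℤ))]
    rw [show (∑ i : {i : Q0 // θ i ≤ 0}, (θ i.1 + (N : ℤ)) * (finrank k (U i.1) : ℤ))
        = (∑ i : {i : Q0 // θ i ≤ 0}, θ i.1 * (finrank k (U i.1) : ℤ))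
          + (N : ℤ) * ∑ i : {i : Q0 // θ i ≤ 0}, (finrank k (U i.1) : ℤ) by
      rw [Finset.mul_sum, ← Finset.sum_add_distrib]
      exact Finset.sum_congr rfl fun i _ => by ring]
    ring
  -- bound on the θ-weighted sum
  have hT_bound : ∀ (U : ∀ i, Submodule k (V i)),
      |∑ i : Q0, θ i * (finrank k (U i) : ℤ)| ≤ C := by
    intro U
    refine le_trans (Finset.abs_sum_le_sum_abs _ _) (Finset.sum_le_sum fun i _ => ?_)
    rw [abs_mul, abs_of_nonneg (by positivity : (0 : ℤ) ≤ (finrank k (U i) : ℤ))]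
    exact mul_le_mul_of_nonneg_left
      (by exact_mod_cast Submodule.finrank_le (U i)) (abs_nonneg _)
  have hS_le : ∀ (U : ∀ i, Submodule k (V i)),
      (∑ i : {i : Q0 // θ i ≤ 0}, (finrank k (U i.1) : ℤ))
        ≤ ∑ i : {i : Q0 // θ i ≤ 0}, (finrank k (V i.1) : ℤ) :=
    fun U => Finset.sum_le_sum fun i _ => by
      exact_mod_cast Submodule.finrank_le (U i.1)
  -- eta of the exceptional pairs
  have eta_bot : EtaMinusVal V θ N (fun _ => ⊥) (⊥ : Submodule k k) = 0 := by
    rw [eta_eq]; simp [finrank_bot]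
  have eta_top : EtaMinusVal V θ N (fun _ => ⊤) (⊤ : Submodule k k) = 0 := by
    rw [eta_eq]
    simp only [finrank_top, finrank_self, Nat.cast_one, mul_one, hθ, zero_add]
    ring
  -- key estimate for L = ⊤
  have hCnn : 0 ≤ C := Finset.sum_nonneg fun i _ => by positivity
  have key_top : ∀ (U : ∀ i, Submodule k (V i)), (¬ ∀ i, U i = ⊤) →
      EtaMinusVal V θ N U (⊤ : Submodule k k) < 0 := by
    intro U hU
    rw [eta_eq]
    simp only [finrank_top, finrank_self, Nat.cast_one, mul_one]
    have hT := (abs_le.mp (hT_bound U)).2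
    rcases lt_or_eq_of_le (hS_le U) with hlt | heq
    · have hm : (N : ℤ) * (∑ i : {i : Q0 // θ i ≤ 0}, (finrank k (U i.1) : ℤ))
          ≤ (N : ℤ) * (∑ i : {i : Q0 // θ i ≤ 0}, (finrank k (V i.1) : ℤ)) - N := by
        nlinarith [Int.natCast_nonneg N, hlt]
      linarith
    · -- all negative-vertex components are full
      have hfull : ∀ i : {i : Q0 // θ i ≤ 0}, U i.1 = ⊤ := by
        have hnn : ∀ i ∈ (Finset.univ : Finset {i : Q0 // θ i ≤ 0}),
            (0 : ℤ) ≤ (finrank k (V i.1) : ℤ) - (finrank k (U i.1) : ℤ) := by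
          intro i _
          have h : (finrank k (U i.1) : ℤ) ≤ (finrank k (V i.1) : ℤ) := by
            exact_mod_cast Submodule.finrank_le (U i.1)
          omega
        have hz : (∑ i : {i : Q0 // θ i ≤ 0},
            ((finrank k (V i.1) : ℤ) - (finrank k (U i.1) : ℤ))) = 0 := by
          rw [Finset.sum_sub_distrib, heq, sub_self]
        intro i
        have := (Finset.sum_eq_zero_iff_of_nonneg hnn).mp hz i (Finset.mem_univ i)
        exact Submodule.eq_top_of_finrank_eq (by omega)
      have hT_lt : (∑ i : Q0, θ i * (finrank k (U i) : ℤ)) < 0 := by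
        rw [← hθ]
        obtain ⟨j, hj⟩ := not_forall.mp hU
        have hjpos : ¬ θ j ≤ 0 := fun h => hj (hfull ⟨j, h⟩)
        refine Finset.sum_lt_sum (fun i _ => ?_) ⟨j, Finset.mem_univ j, ?_⟩
        · by_cases hi : θ i ≤ 0
          · rw [hfull ⟨i, hi⟩, finrank_top]
          · exact mul_le_mul_of_nonneg_left
              (by exact_mod_cast Submodule.finrank_le (U i)) (by omega)
        · have h1 : finrank k (U j) < finrank k (V j) := by
            rcases lt_or_eq_of_le (Submodule.finrank_le (U j)) with h | h
            · exact h
            · exact absurd (Submodule.eq_top_of_finrank_eq h) hj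
          have h2 : (0 : ℤ) < θ j := by omega
          have h3 : (finrank k (U j) : ℤ) < (finrank k (V j) : ℤ) := by exact_mod_cast h1
          exact mul_lt_mul_of_pos_left h3 h2
      rw [heq]; linarith
  -- key estimate for L = ⊥
  have key_bot : ∀ (U : ∀ i, Submodule k (V i)), (¬ ∀ i, U i = ⊥) →
      0 < EtaMinusVal V θ N U (⊥ : Submodule k k) := by
    intro U hU
    rw [eta_eq]
    simp only [finrank_bot, Nat.cast_zero, mul_zero, sub_zero]
    have hS0 : (0 : ℤ) ≤ ∑ i : {i : Q0 // θ i ≤ 0}, (finrank k (U i.1) : ℤ) :=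
      Finset.sum_nonneg fun i _ => by positivity
    rcases eq_or_lt_of_le hS0 with heq | hlt
    · -- all negative components are ⊥; some positive component is nonzero
      have hker0 : ∀ i : {i : Q0 // θ i ≤ 0}, U i.1 = ⊥ := by
        have hnn : ∀ i ∈ (Finset.univ : Finset {i : Q0 // θ i ≤ 0}),
            (0 : ℤ) ≤ (finrank k (U i.1) : ℤ) := by
          intro i _; positivity
        intro i
        have := (Finset.sum_eq_zero_iff_of_nonneg hnn).mp heq.symm i (Finset.mem_univ i)
        exact Submodule.finrank_eq_zero.mp (by exact_mod_cast this)
      obtain ⟨j, hj⟩ := not_forall.mp hU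
      have hjpos : ¬ θ j ≤ 0 := fun h => hj (hker0 ⟨j, h⟩)
      have hT_pos : 0 < (∑ i : Q0, θ i * (finrank k (U i) : ℤ)) := by
        refine Finset.sum_pos' (fun i _ => ?_) ⟨j, Finset.mem_univ j, ?_⟩
        · by_cases hi : θ i ≤ 0
          · rw [hker0 ⟨i, hi⟩, finrank_bot]; simp
          · exact mul_nonneg (by omega) (by positivity)
        · have h1 : 0 < finrank k (U j) :=
            Nat.pos_of_ne_zero fun h => hj (Submodule.finrank_eq_zero.mp h)
          have h2 : (0 : ℤ) < θ j := by omega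
          have h3 : (0 : ℤ) < (finrank k (U j) : ℤ) := by exact_mod_cast h1
          positivity
      rw [← heq, mul_zero, add_zero]
      exact hT_pos
    · have h2 := (abs_le.mp (hT_bound U)).1
      have hm : (N : ℤ) ≤ (N : ℤ) * ∑ i : {i : Q0 // θ i ≤ 0}, (finrank k (U i.1) : ℤ) := by
        nlinarith [Int.natCast_nonneg N, hlt]
      linarith
  -- classification of L
  have hLcase : ∀ L : Submodule k k, L = ⊥ ∨ L = ⊤ := fun L => Ideal.eq_bot_or_top L
  -- (i) → (iii)
  have h13 : (∀ (U : ∀ i : Q0, Submodule k (V i)) (L : Submodule k k),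
        IsSubrep src tgt V M U →
        (L = ⊥ → ∀ i : {i : Q0 // θ i ≤ 0}, U i.1 ≤ LinearMap.ker (B i)) →
        EtaMinusVal V θ N U L ≤ 0) →
      (¬ ∃ U : ∀ i : Q0, Submodule k (V i),
        IsSubrep src tgt V M U ∧ (¬ ∀ i, U i = ⊥) ∧
        (∀ i : {i : Q0 // θ i ≤ 0}, U i.1 ≤ LinearMap.ker (B i))) := by
    intro hi
    rintro ⟨U, hsub, hne, hker⟩
    have := hi U ⊥ hsub (fun _ => hker)
    exact absurd this (not_le.mpr (key_bot U hne))
  -- (ii) → (iii)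
  have h23 : (∀ (U : ∀ i : Q0, Submodule k (V i)) (L : Submodule k k),
        IsSubrep src tgt V M U →
        (L = ⊥ → ∀ i : {i : Q0 // θ i ≤ 0}, U i.1 ≤ LinearMap.ker (B i)) →
        ¬((∀ i, U i = ⊥) ∧ L = ⊥) → ¬((∀ i, U i = ⊤) ∧ L = ⊤) →
        EtaMinusVal V θ N U L < 0) →
      (¬ ∃ U : ∀ i : Q0, Submodule k (V i),
        IsSubrep src tgt V M U ∧ (¬ ∀ i, U i = ⊥) ∧
        (∀ i : {i : Q0 // θ i ≤ 0}, U i.1 ≤ LinearMap.ker (B i))) := by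
    intro hii
    rintro ⟨U, hsub, hne, hker⟩
    have := hii U ⊥ hsub (fun _ => hker)
      (fun h => hne h.1) (fun h => (bot_ne_top h.2).elim)
    exact absurd this (not_lt.mpr (le_of_lt (key_bot U hne)))
  -- (iii) → (ii)
  have h32 : (¬ ∃ U : ∀ i : Q0, Submodule k (V i),
        IsSubrep src tgt V M U ∧ (¬ ∀ i, U i = ⊥) ∧
        (∀ i : {i : Q0 // θ i ≤ 0}, U i.1 ≤ LinearMap.ker (B i))) →
      (∀ (U : ∀ i : Q0, Submodule k (V i)) (L : Submodule k k),
        IsSubrep src tgt V M U →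
        (L = ⊥ → ∀ i : {i : Q0 // θ i ≤ 0}, U i.1 ≤ LinearMap.ker (B i)) →
        ¬((∀ i, U i = ⊥) ∧ L = ⊥) → ¬((∀ i, U i = ⊤) ∧ L = ⊤) →
        EtaMinusVal V θ N U L < 0) := by
    intro hiii U L hsub hker hne_bot hne_top
    rcases hLcase L with rfl | rfl
    · exfalso
      have hne : ¬ ∀ i, U i = ⊥ := fun h => hne_bot ⟨h, rfl⟩
      exact hiii ⟨U, hsub, hne, hker rfl⟩
    · exact key_top U (fun h => hne_top ⟨h, rfl⟩)
  -- (ii) → (i)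
  have h21 : (∀ (U : ∀ i : Q0, Submodule k (V i)) (L : Submodule k k),
        IsSubrep src tgt V M U →
        (L = ⊥ → ∀ i : {i : Q0 // θ i ≤ 0}, U i.1 ≤ LinearMap.ker (B i)) →
        ¬((∀ i, U i = ⊥) ∧ L = ⊥) → ¬((∀ i, U i = ⊤) ∧ L = ⊤) →
        EtaMinusVal V θ N U L < 0) →
      (∀ (U : ∀ i : Q0, Submodule k (V i)) (L : Submodule k k),
        IsSubrep src tgt V M U →
        (L = ⊥ → ∀ i : {i : Q0 // θ i ≤ 0}, U i.1 ≤ LinearMap.ker (B i)) →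
        EtaMinusVal V θ N U L ≤ 0) := by
    intro hii U L hsub hker
    by_cases hb : (∀ i, U i = ⊥) ∧ L = ⊥
    · have hU : U = fun _ => ⊥ := funext hb.1
      rw [hU, hb.2, eta_bot]
    · by_cases ht : (∀ i, U i = ⊤) ∧ L = ⊤
      · have hU : U = fun _ => ⊤ := funext ht.1
        rw [hU, ht.2, eta_top]
      · exact le_of_lt (hii U L hsub hker hb ht)
  exact ⟨⟨fun hi => h32 (h13 hi), h21⟩, ⟨h23, h32⟩⟩
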